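/- Let q be a prime power and assume the Main Conjecture on MDS codes for q, namely: every F_q-linear code of some length m and dimension k with 2 ≤ k ≤ m − 2 whose minimum Hamming distance equals m − k + 1 satisfies m ≤ q + 2. Let n be a prime and d an integer with q + 2 < n, 3 ≤ d ≤ n − 2, and ((d−1)(q−1)+1) · n^{d−2} < q^d. Then (i) every F_q-linear code of length n with minimum Hamming distance at least d has at most q^{n−d} codewords, and (ii) there exists a code C ⊆ {0, 1, …, q−1}^n with minimum Hamming distance at least d and |C| > q^{n−d}. Consequently r_q(n, d) < r_q^L(n, d). -/

import Mathlib

/-!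
Linear codes: by the Singleton bound a linear code of length `n` and minimum distance `d` has
dimension at most `n - d + 1`, and at equality it is MDS (a nonzero codeword vanishing on `n - d`
coordinates has weight exactly `d`), which the MDS conjecture forbids since `n > q + 2`.

Nonlinear codes: with `N = (d - 1)(q - 1) + 1`, the syndrome
`x ↦ (∑ xᵢ mod N, (∑ xᵢ iʲ mod n)_{1 ≤ j ≤ d - 2})` takes at most `N n^(d-2) < q^d` values,
so some fibre has more than `q^(n-d)` words. Two words of a fibre at distance `< d` differ by
an integer vector `e` with `|eᵢ| ≤ q - 1` supported on at most `d - 1` coordinates. Then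
`|∑ eᵢ| < N` forces `∑ eᵢ = 0`, the Vandermonde system over `𝔽_n` forces `e ≡ 0 mod n`,
and `q ≤ n` gives `e = 0`.
-/

open Finset

section LinearCodes

variable {F ι : Type*} [Field F] [Fintype ι] [DecidableEq F] (D : Submodule F (ι → F))

theorem Submodule.exists_ne_zero_hammingNorm_add_le {j : ℕ} (hj : j < Module.finrank F D) :
    ∃ x ∈ D, x ≠ 0 ∧ hammingNorm x + j ≤ Fintype.card ι := by
  classical
  have hjι : j ≤ #(univ : Finset ι) := by
    simpa using hj.le.trans (D.finrank_le.trans (Module.finrank_fintype_fun_eq_card F).le)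
  obtain ⟨s, -, hs⟩ := exists_subset_card_eq hjι
  let restrict : D →ₗ[F] (s → F) := (LinearMap.funLeft F F ((↑) : s → ι)).comp D.subtype
  obtain ⟨x, hx, hx0⟩ := (Submodule.ne_bot_iff _).mp
    (LinearMap.ker_ne_bot_of_finrank_lt (f := restrict) (by simpa [hs] using hj))
  refine ⟨x, x.2, by simpa using hx0, ?_⟩
  have hvanish : Disjoint ({i | (x : ι → F) i ≠ 0} : Finset ι) s :=
    disjoint_left.2 fun i hi his => (mem_filter.1 hi).2 (congrFun hx ⟨i, his⟩)
  calc hammingNorm (x : ι → F) + j = #(({i | (x : ι → F) i ≠ 0} : Finset ι) ∪ s) := by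
        rw [card_union_of_disjoint hvanish, hs]; rfl
    _ ≤ Fintype.card ι := card_le_univ _

variable {D} {d : ℕ}

theorem Submodule.finrank_le_of_le_hammingNorm
    (hmin : ∀ x ∈ D, x ≠ 0 → d ≤ hammingNorm x) :
    Module.finrank F D ≤ Fintype.card ι - d + 1 := by
  by_contra! h
  obtain ⟨x, hx, hx0, hw⟩ := D.exists_ne_zero_hammingNorm_add_le h
  have := hmin x hx hx0
  omega

theorem Submodule.exists_hammingNorm_eq_of_finrank_eq
    (hmin : ∀ x ∈ D, x ≠ 0 → d ≤ hammingNorm x)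
    (hk : Module.finrank F D = Fintype.card ι - d + 1) :
    ∃ x ∈ D, x ≠ 0 ∧ hammingNorm x = d := by
  obtain ⟨x, hx, hx0, hw⟩ :=
    D.exists_ne_zero_hammingNorm_add_le (j := Fintype.card ι - d) (by omega)
  have := hmin x hx hx0
  exact ⟨x, hx, hx0, by omega⟩

end LinearCodes

theorem eq_zero_of_forall_sum_mul_pow_eq_zero {R ι : Type*} [CommRing R] [IsDomain R]
    [DecidableEq R] [Fintype ι] {a v : ι → R} (ha : Function.Injective a) {m : ℕ}
    (hv : #{i | v i ≠ 0} ≤ m) (h : ∀ j < m, ∑ i, v i * a i ^ j = 0) : v = 0 := by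
  set s : Finset ι := {i | v i ≠ 0}
  let σ := s.equivFin.symm
  have hσ : (fun k => v (σ k)) = 0 := by
    refine Matrix.eq_zero_of_forall_pow_sum_mul_pow_eq_zero (f := fun k => a (σ k))
      (ha.comp (Subtype.val_injective.comp σ.injective)) fun j => ?_
    rw [Equiv.sum_comp σ (fun i : s => v i * a i ^ (j : ℕ)),
      sum_coe_sort s (fun i => v i * a i ^ (j : ℕ)),
      sum_filter_of_ne fun i _ hi => left_ne_zero_of_mul hi]
    exact h j (j.2.trans_le hv)
  funext i
  by_contra hi
  have his : i ∈ s := mem_filter.2 ⟨mem_univ i, hi⟩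
  exact hi (by simpa using congrFun hσ (σ.symm ⟨i, his⟩))

theorem ZMod.natCast_comp_finVal_injective (n : ℕ) :
    Function.Injective fun i : Fin n => ((i : ℕ) : ZMod n) := fun i j h =>
  Fin.ext <| by
    simpa [Nat.mod_eq_of_lt i.2, Nat.mod_eq_of_lt j.2] using
      (ZMod.natCast_eq_natCast_iff' _ _ _).1 h

theorem Int.abs_sum_le_card_mul {ι : Type*} [Fintype ι] {e : ι → ℤ} {b : ℤ}
    (he : ∀ i, |e i| ≤ b) :
    |∑ i, e i| ≤ #{i | e i ≠ 0} * b := by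
  calc |∑ i, e i| = |∑ i with e i ≠ 0, e i| := by rw [sum_filter_ne_zero]
    _ ≤ ∑ i with e i ≠ 0, |e i| := abs_sum_le_sum_abs _ _
    _ ≤ #{i | e i ≠ 0} * b := by
        rw [← nsmul_eq_mul]; exact sum_le_card_nsmul _ _ _ fun i _ => he i

def syndrome (N r : ℕ) {q n : ℕ} (x : Fin n → Fin q) : ZMod N × (Fin r → ZMod n) :=
  (∑ i, ((x i : ℕ) : ZMod N),
    fun j => ∑ i, ((x i : ℕ) : ZMod n) * ((i : ℕ) : ZMod n) ^ ((j : ℕ) + 1))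

theorem eq_of_syndrome_eq_of_hammingDist_lt {N r q n d : ℕ} (hn : n.Prime) (hqn : q ≤ n)
    (hN : (d - 1) * (q - 1) < N) (hr : d ≤ r + 2) {x y : Fin n → Fin q}
    (hs : syndrome N r x = syndrome N r y) (hdist : hammingDist x y < d) : x = y := by
  have := Fact.mk hn
  obtain ⟨e, he⟩ : ∃ e : Fin n → ℤ, ∀ i, e i = (x i : ℤ) - y i := ⟨_, fun _ => rfl⟩
  have hbound : ∀ i, |e i| ≤ (q - 1 : ℕ) := fun i => by
    have := (x i).2; have := (y i).2; have := he i; rw [abs_le]; omega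
  have hsupp : #{i | e i ≠ 0} < d := by
    simpa [he, sub_eq_zero, Fin.val_inj, hammingDist] using hdist
  have hsum : ∑ i, e i = 0 := by
    refine Int.eq_zero_of_abs_lt_dvd ((ZMod.intCast_zmod_eq_zero_iff_dvd _ N).1 ?_) ?_
    · push_cast [he, sum_sub_distrib]
      exact sub_eq_zero.2 (Prod.ext_iff.1 hs).1
    · have := Int.abs_sum_le_card_mul hbound
      have : (#{i | e i ≠ 0} : ℤ) * (q - 1 : ℕ) ≤ (d - 1 : ℕ) * (q - 1 : ℕ) := by
        gcongr; omega
      omega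
  have hpow : ∀ j < d - 1, ∑ i, ((e i : ℤ) : ZMod n) * ((i : ℕ) : ZMod n) ^ j = 0 := by
    rintro (_ | j) hj
    · simpa using congrArg (Int.cast : ℤ → ZMod n) hsum
    · have := congrFun (Prod.ext_iff.1 hs).2 ⟨j, by omega⟩
      push_cast [he, sub_mul, sum_sub_distrib]
      exact sub_eq_zero.2 this
  have hsupp' : #{i | ((e i : ℤ) : ZMod n) ≠ 0} ≤ d - 1 :=
    (card_le_card (monotone_filter_right _ fun i _ h h' => h (by simp [h']))).trans
      (Nat.le_sub_one_of_lt hsupp)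
  have hzero :=
    eq_zero_of_forall_sum_mul_pow_eq_zero (ZMod.natCast_comp_finVal_injective n) hsupp' hpow
  funext i
  have hi : e i = 0 := Int.eq_zero_of_abs_lt_dvd
    ((ZMod.intCast_zmod_eq_zero_iff_dvd _ n).1 (congrFun hzero i))
    (by have := hbound i; have := hn.pos; omega)
  have := he i
  exact Fin.ext (by omega)

theorem exists_code_card_gt {q n d : ℕ} (hn : n.Prime) (hqn : q ≤ n) (hdn : d ≤ n)
    (hineq : ((d - 1) * (q - 1) + 1) * n ^ (d - 2) < q ^ d) :
    ∃ C : Finset (Fin n → Fin q),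
      (∀ x ∈ C, ∀ y ∈ C, x ≠ y → d ≤ hammingDist x y) ∧ q ^ (n - d) < #C := by
  set N := (d - 1) * (q - 1) + 1
  have := Fact.mk hn
  have hq : 0 < q := Nat.pos_of_ne_zero fun hq => by
    subst hq; rcases d with _ | d <;> simp at hineq
  have : NeZero N := ⟨by omega⟩
  have hcard : Fintype.card (ZMod N × (Fin (d - 2) → ZMod n)) * q ^ (n - d)
      < Fintype.card (Fin n → Fin q) := by
    calc Fintype.card (ZMod N × (Fin (d - 2) → ZMod n)) * q ^ (n - d)
        = N * n ^ (d - 2) * q ^ (n - d) := by simp [ZMod.card]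
      _ < q ^ d * q ^ (n - d) := by gcongr
      _ = Fintype.card (Fin n → Fin q) := by rw [← pow_add, Nat.add_sub_cancel' hdn]; simp
  obtain ⟨s, hs⟩ := Fintype.exists_lt_card_fiber_of_mul_lt_card (syndrome N (d - 2)) hcard
  refine ⟨_, fun x hx y hy hxy => ?_, hs⟩
  by_contra! hlt
  exact hxy <| eq_of_syndrome_eq_of_hammingDist_lt hn hqn (Nat.lt_succ_self _) (by omega)
    ((mem_filter.1 hx).2.trans (mem_filter.1 hy).2.symm) hlt

/-- Assume the Main Conjecture on MDS codes over `F_q`. Let `n` be a prime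
with `q + 2 < n`, let `3 ≤ d ≤ n − 2`, and suppose `((d−1)(q−1)+1) · n^{d−2} < q^d`. Then
(i) every `F_q`-linear code of length `n` with minimum distance at least `d` has at most
`q^{n−d}` codewords, and (ii) there is a `q`-ary code of length `n` with minimum distance
at least `d` and more than `q^{n−d}` codewords.  Consequently `r_q(n,d) < r_q^L(n,d)`. -/
theorem stmt_12 (q n d : ℕ) (F : Type) [Field F] [Fintype F] [DecidableEq F]
    (hF : Fintype.card F = q)
    (MDSconj : ∀ (m k : ℕ) (C : Submodule F (Fin m → F)),
      Module.finrank F C = k → 2 ≤ k → k ≤ m - 2 →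
      (∀ x ∈ C, x ≠ 0 → m - k + 1 ≤ hammingNorm x) →
      (∃ x ∈ C, x ≠ 0 ∧ hammingNorm x = m - k + 1) →
      m ≤ q + 2)
    (hn : n.Prime) (hqn : q + 2 < n) (hd3 : 3 ≤ d) (hdn : d ≤ n - 2)
    (hineq : ((d - 1) * (q - 1) + 1) * n ^ (d - 2) < q ^ d) :
    (∀ D : Submodule F (Fin n → F),
      (∀ x ∈ D, ∀ y ∈ D, x ≠ y → d ≤ hammingDist x y) →
      Nat.card D ≤ q ^ (n - d)) ∧
    (∃ C : Finset (Fin n → Fin q),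
      (∀ x ∈ C, ∀ y ∈ C, x ≠ y → d ≤ hammingDist x y) ∧
      q ^ (n - d) < C.card) := by
  refine ⟨fun D hD => ?_, exists_code_card_gt hn (by omega) (by omega) hineq⟩
  have hmin : ∀ x ∈ D, x ≠ 0 → d ≤ hammingNorm x := fun x hx hx0 => by
    simpa using hD x hx 0 D.zero_mem hx0
  have hsingleton : Module.finrank F D ≤ n - d + 1 := by
    simpa using D.finrank_le_of_le_hammingNorm hmin
  have hnotMDS : Module.finrank F D ≠ n - d + 1 := fun hk => by
    obtain ⟨x, hx, hx0, hxd⟩ := D.exists_hammingNorm_eq_of_finrank_eq hmin (by simpa using hk)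
    have := MDSconj n _ D hk (by omega) (by omega)
      (fun y hy hy0 => by have := hmin y hy hy0; omega) ⟨x, hx, hx0, by omega⟩
    omega
  rw [Module.natCard_eq_pow_finrank (K := F), Nat.card_eq_fintype_card, hF]
  exact Nat.pow_le_pow_right (hF ▸ Fintype.card_pos) (by omega)
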